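/- The Petersen graph admits a MED decomposition: its edge set can be partitioned into a matching of size 2, an 8-cycle, and one double-star whose leaves form an independent set. -/
import Mathlib


/-- Two edges are incident if they share a vertex. -/
def EdgeIncident {V : Type*} (e f : Sym2 V) : Prop := ∃ v, v ∈ e ∧ v ∈ f

/-- `G` is `(r,s)`-edge-choosable: from any assignment of `r`-element lists to the edges one can
select `s` colors per edge from its list so that incident edges receive disjoint sets. -/
def EdgeChoosable {V : Type*} (G : SimpleGraph V) (r s : ℕ) : Prop :=
  ∀ L : Sym2 V → Finset ℕ, (∀ e ∈ G.edgeSet, (L e).card = r) →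
    ∃ C : Sym2 V → Finset ℕ,
      (∀ e ∈ G.edgeSet, C e ⊆ L e ∧ (C e).card = s) ∧
      ∀ e ∈ G.edgeSet, ∀ f ∈ G.edgeSet, e ≠ f → EdgeIncident e f → Disjoint (C e) (C f)

/-- Degree of a vertex, measured as the number of its neighbors. -/
noncomputable def edeg {V : Type*} (H : SimpleGraph V) (v : V) : ℕ := (H.neighborSet v).ncard

/-- A set of edges forming a matching: pairwise non-incident edges. -/
def IsMatchingSet {V : Type*} (E₁ : Set (Sym2 V)) : Prop :=
  ∀ e ∈ E₁, ∀ f ∈ E₁, e ≠ f → ¬ EdgeIncident e f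

/-- The edge set `E₂` forms a disjoint union of even cycles: every vertex touched by `E₂`
has exactly two incident edges of `E₂`, and each component has evenly many vertices. -/
def IsEvenCyclesSet {V : Type*} (E₂ : Set (Sym2 V)) : Prop :=
  (∀ v ∈ (SimpleGraph.fromEdgeSet E₂).support, edeg (SimpleGraph.fromEdgeSet E₂) v = 2) ∧
  (∀ v ∈ (SimpleGraph.fromEdgeSet E₂).support,
    Even ((((SimpleGraph.fromEdgeSet E₂).connectedComponentMk v).supp).ncard))

/-- The edge set `E₃` forms vertex-disjoint double-stars (6-vertex trees with two adjacent
degree-3 centers, each with two leaves) whose leaves are independent in `G`. -/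
def IsDoubleStarsSet {V : Type*} (G : SimpleGraph V) (E₃ : Set (Sym2 V)) : Prop :=
  let H := SimpleGraph.fromEdgeSet E₃
  (∀ v ∈ H.support, edeg H v = 1 ∨ edeg H v = 3) ∧
  (∀ v ∈ H.support, edeg H v = 3 → ({u | u ∈ H.neighborSet v ∧ edeg H u = 3}).ncard = 1) ∧
  (∀ v ∈ H.support, edeg H v = 1 → ∀ u, H.Adj v u → edeg H u = 3) ∧
  (∀ u v, u ∈ H.support → v ∈ H.support → edeg H u = 1 → edeg H v = 1 → ¬ G.Adj u v)

/-- A MED decomposition of `G`: a partition of its edge set into a matching `E₁`,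
a disjoint union of even cycles `E₂`, and independent double-stars `E₃`. -/
def IsMEDDecomposition {V : Type*} (G : SimpleGraph V) (E₁ E₂ E₃ : Set (Sym2 V)) : Prop :=
  E₁ ∪ E₂ ∪ E₃ = G.edgeSet ∧
  Disjoint E₁ E₂ ∧ Disjoint E₁ E₃ ∧ Disjoint E₂ E₃ ∧
  IsMatchingSet E₁ ∧ IsEvenCyclesSet E₂ ∧ IsDoubleStarsSet G E₃

/-- The Kneser graph `K(5,2)`, i.e. the Petersen graph: vertices are the 2-element subsets
of a 5-element set, adjacent iff disjoint. -/
def petersen : SimpleGraph {A : Finset (Fin 5) // A.card = 2} :=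
  SimpleGraph.fromRel (fun A B => Disjoint A.val B.val)

/-! ### Auxiliary material for the proof -/

section MEDAux

open SimpleGraph

abbrev Vx : Type := {A : Finset (Fin 5) // A.card = 2}

instance : DecidableRel petersen.Adj := fun a b =>
  decidable_of_iff _ (SimpleGraph.fromRel_adj _ a b).symm

instance instFromEdgeSetDecidable {α : Type*} [DecidableEq α] (s : Finset (Sym2 α)) :
    DecidableRel (SimpleGraph.fromEdgeSet (↑s : Set (Sym2 α))).Adj := fun _ _ =>
  decidable_of_iff _ (SimpleGraph.fromEdgeSet_adj _).symm

instance EdgeIncident.decidable {α : Type*} [DecidableEq α] [Fintype α] (e f : Sym2 α) :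
    Decidable (EdgeIncident e f) :=
  decidable_of_iff (∃ v, v ∈ e ∧ v ∈ f) Iff.rfl

def p01 : Vx := ⟨{0,1}, by decide⟩
def p02 : Vx := ⟨{0,2}, by decide⟩
def p03 : Vx := ⟨{0,3}, by decide⟩
def p04 : Vx := ⟨{0,4}, by decide⟩
def p12 : Vx := ⟨{1,2}, by decide⟩
def p13 : Vx := ⟨{1,3}, by decide⟩
def p14 : Vx := ⟨{1,4}, by decide⟩
def p23 : Vx := ⟨{2,3}, by decide⟩
def p24 : Vx := ⟨{2,4}, by decide⟩
def p34 : Vx := ⟨{3,4}, by decide⟩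

/-- the matching -/
def S1 : Finset (Sym2 Vx) := {s(p02,p13), s(p12,p03)}
/-- the 8-cycle 02-14-03-24-13-04-12-34-02 -/
def S2 : Finset (Sym2 Vx) :=
  {s(p02,p14), s(p14,p03), s(p03,p24), s(p24,p13), s(p13,p04), s(p04,p12), s(p12,p34), s(p34,p02)}
/-- the double star with centers 01, 23 -/
def S3 : Finset (Sym2 Vx) := {s(p01,p23), s(p01,p34), s(p01,p24), s(p23,p04), s(p23,p14)}

/-- vertices of the 8-cycle -/
def T2 : Finset Vx := {p02, p14, p03, p24, p13, p04, p12, p34}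
/-- vertices of the double star -/
def T3 : Finset Vx := {p01, p23, p34, p24, p04, p14}

lemma edeg_eq {V : Type*} [Fintype V] [DecidableEq V] (H : SimpleGraph V)
    [DecidableRel H.Adj] (v : V) : edeg H v = H.degree v := by
  rw [edeg, Set.ncard_eq_toFinset_card', Set.toFinset_card,
    SimpleGraph.card_neighborSet_eq_degree]

lemma reach_eq_of_isolated {V : Type*} {H : SimpleGraph V} {u v : V}
    (h : ∀ w, ¬ H.Adj u w) (r : H.Reachable u v) : u = v := by
  obtain ⟨p⟩ := r
  cases p with
  | nil => rfl
  | cons ha _ => exact absurd ha (h _)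

lemma hsupp2 : (SimpleGraph.fromEdgeSet (↑S2 : Set (Sym2 Vx))).support = ↑T2 := by
  ext v
  simp only [SimpleGraph.mem_support, Finset.mem_coe]
  revert v
  decide

lemma hsupp3 : (SimpleGraph.fromEdgeSet (↑S3 : Set (Sym2 Vx))).support = ↑T3 := by
  ext v
  simp only [SimpleGraph.mem_support, Finset.mem_coe]
  revert v
  decide

lemma key2 : ∀ x ∈ T2, (SimpleGraph.fromEdgeSet (↑S2 : Set (Sym2 Vx))).Reachable x p02 := by
  set H := SimpleGraph.fromEdgeSet (↑S2 : Set (Sym2 Vx)) with hH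
  have r02 : H.Reachable p02 p02 := Reachable.refl _
  have r14 : H.Reachable p14 p02 := ((by decide : H.Adj p14 p02)).reachable
  have r03 : H.Reachable p03 p02 := ((by decide : H.Adj p03 p14)).reachable.trans r14
  have r24 : H.Reachable p24 p02 := ((by decide : H.Adj p24 p03)).reachable.trans r03
  have r13 : H.Reachable p13 p02 := ((by decide : H.Adj p13 p24)).reachable.trans r24
  have r04 : H.Reachable p04 p02 := ((by decide : H.Adj p04 p13)).reachable.trans r13
  have r12 : H.Reachable p12 p02 := ((by decide : H.Adj p12 p04)).reachable.trans r04
  have r34 : H.Reachable p34 p02 := ((by decide : H.Adj p34 p02)).reachable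
  intro x hx
  fin_cases hx <;> assumption

lemma hnoadj2 : ∀ u : Vx, u ∉ T2 →
    ∀ w, ¬ (SimpleGraph.fromEdgeSet (↑S2 : Set (Sym2 Vx))).Adj u w := by decide

lemma supp_eq (v : Vx) (hv : v ∈ T2) :
    (((SimpleGraph.fromEdgeSet (↑S2 : Set (Sym2 Vx))).connectedComponentMk v).supp) = ↑T2 := by
  ext u
  rw [SimpleGraph.ConnectedComponent.mem_supp_iff, SimpleGraph.ConnectedComponent.eq,
    Finset.mem_coe]
  constructor
  · intro r
    by_contra hu
    exact hu ((reach_eq_of_isolated (hnoadj2 u hu) r) ▸ hv)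
  · intro hu
    exact (key2 u hu).trans (key2 v hv).symm

end MEDAux

/-- The Petersen graph admits a MED decomposition into a matching of size 2, a single
8-cycle (8 edges forming one connected even cycle), and one double-star (5 edges) whose
leaves form an independent set. -/
theorem stmt17 :
    ∃ E₁ E₂ E₃ : Set (Sym2 {A : Finset (Fin 5) // A.card = 2}),
      IsMEDDecomposition petersen E₁ E₂ E₃ ∧
      E₁.ncard = 2 ∧
      E₂.ncard = 8 ∧
      (∀ x ∈ (SimpleGraph.fromEdgeSet E₂).support,
        ∀ y ∈ (SimpleGraph.fromEdgeSet E₂).support,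
          (SimpleGraph.fromEdgeSet E₂).Reachable x y) ∧
      E₃.ncard = 5 := by
  refine ⟨↑S1, ↑S2, ↑S3, ⟨?_, ?_, ?_, ?_, ?_, ⟨?_, ?_⟩, ?_⟩, ?_, ?_, ?_, ?_⟩
  · -- union is the edge set
    ext e
    induction e using Sym2.ind with
    | _ a b =>
      simp only [Set.mem_union, Finset.mem_coe, SimpleGraph.mem_edgeSet]
      revert a b
      decide
  · rw [Finset.disjoint_coe]; decide
  · rw [Finset.disjoint_coe]; decide
  · rw [Finset.disjoint_coe]; decide
  · -- matching
    have hm : ∀ e ∈ S1, ∀ f ∈ S1, e ≠ f → ¬ EdgeIncident e f := by decide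
    exact fun e he f hf => hm e (Finset.mem_coe.mp he) f (Finset.mem_coe.mp hf)
  · -- even cycles: degree 2
    intro v hv
    rw [hsupp2, Finset.mem_coe] at hv
    rw [edeg_eq]
    revert v
    decide
  · -- even cycles: even components
    intro v hv
    rw [hsupp2, Finset.mem_coe] at hv
    rw [supp_eq v hv, Set.ncard_coe_finset]
    decide
  · -- double stars
    refine ⟨?_, ?_, ?_, ?_⟩
    · intro v hv
      rw [hsupp3, Finset.mem_coe] at hv
      simp only [edeg_eq]
      revert v
      decide
    · intro v hv h3
      rw [hsupp3, Finset.mem_coe] at hv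
      rw [edeg_eq] at h3
      have hset : {u | u ∈ (SimpleGraph.fromEdgeSet (↑S3 : Set (Sym2 Vx))).neighborSet v ∧
          edeg (SimpleGraph.fromEdgeSet (↑S3 : Set (Sym2 Vx))) u = 3} =
          ↑(Finset.univ.filter fun u => (SimpleGraph.fromEdgeSet (↑S3 : Set (Sym2 Vx))).Adj v u ∧
            (SimpleGraph.fromEdgeSet (↑S3 : Set (Sym2 Vx))).degree u = 3) := by
        ext u
        simp [edeg_eq, SimpleGraph.mem_neighborSet]
      rw [hset, Set.ncard_coe_finset]
      clear hset
      revert v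
      decide
    · intro v hv h1 u hadj
      rw [hsupp3, Finset.mem_coe] at hv
      rw [edeg_eq] at h1
      rw [edeg_eq]
      have hmaster : ∀ v ∈ T3, (SimpleGraph.fromEdgeSet (↑S3 : Set (Sym2 Vx))).degree v = 1 →
          ∀ u, (SimpleGraph.fromEdgeSet (↑S3 : Set (Sym2 Vx))).Adj v u →
          (SimpleGraph.fromEdgeSet (↑S3 : Set (Sym2 Vx))).degree u = 3 := by decide
      exact hmaster v hv h1 u hadj
    · intro u v hu hv h1u h1v
      rw [hsupp3, Finset.mem_coe] at hu hv
      rw [edeg_eq] at h1u h1v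
      have hmaster : ∀ u ∈ T3, ∀ v ∈ T3,
          (SimpleGraph.fromEdgeSet (↑S3 : Set (Sym2 Vx))).degree u = 1 →
          (SimpleGraph.fromEdgeSet (↑S3 : Set (Sym2 Vx))).degree v = 1 →
          ¬ petersen.Adj u v := by decide
      exact hmaster u hu v hv h1u h1v
  · rw [Set.ncard_coe_finset]; decide
  · rw [Set.ncard_coe_finset]; decide
  · intro x hx y hy
    rw [hsupp2, Finset.mem_coe] at hx hy
    exact (key2 x hx).trans (key2 y hy).symm
  · rw [Set.ncard_coe_finset]; decide
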